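/- For all n ≤ N, there exists an n × N 0-1 matrix M with st₀(M) + st₁(M) = ⌈n/2⌉ + N − 1; in particular, Σ(n,N) := min over all n × N 0-1 matrices M of (st₀(M)+st₁(M)) equals ⌈n/2⌉ + N − 1. -/

import Mathlib

/-- A step of a staircase: the next position is strictly to the right in the
same row, or strictly below in the same column. -/
def Step {n N : ℕ} (p q : Fin n × Fin N) : Prop :=
  (p.1 = q.1 ∧ p.2 < q.2) ∨ (p.2 = q.2 ∧ p.1 < q.1)

/-- A `v`-staircase in the 0-1 matrix `M`: a sequence of positions all holding
the value `v`, each successive one strictly to the right in the same row or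
strictly below in the same column of the previous one. -/
def IsStaircase {n N : ℕ} (M : Fin n → Fin N → Fin 2) (v : Fin 2)
    (L : List (Fin n × Fin N)) : Prop :=
  (∀ p ∈ L, M p.1 p.2 = v) ∧ L.Chain' Step

/-- `st M v`: the maximum length of a `v`-staircase in `M`. -/
noncomputable def st {n N : ℕ} (M : Fin n → Fin N → Fin 2) (v : Fin 2) : ℕ :=
  sSup {l : ℕ | ∃ L, IsStaircase M v L ∧ L.length = l}

/-!
Lower bound: by induction on the number of columns, every matrix has a `0`-staircase and a
`1`-staircase of total length `⌈n/2⌉ + N - 1` which are empty or start in a common row `r`.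
For one column take the majority value; when a column is added on the left, its entry in row
`r` extends the staircase of its own value by one.

Upper bound: the ones of `P` lie on `N - 1` antidiagonals, and when `n ≤ N` no step joins the
two triangles of zeros, which meet `⌊n/2⌋` and `⌈n/2⌉` antidiagonals respectively; a staircase
meets each antidiagonal at most once.
-/

theorem List.length_le_of_isChain_lt {α : Type*} {L : List α} (g : α → ℕ) {K : ℕ}
    (hc : L.IsChain (fun a b => g a < g b)) (hK : ∀ a ∈ L, g a < K) : L.length ≤ K := by
  have hnodup : (L.map g).Nodup := ((List.isChain_map g).2 hc).pairwise.nodup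
  have hsub : L.map g ⊆ List.range K := by
    simpa [List.subset_def] using hK
  simpa using (hnodup.subperm hsub).length_le

section Staircase

variable {n N : ℕ}

theorem Step.val_add_lt {p q : Fin n × Fin N} (h : Step p q) :
    p.1.val + p.2.val < q.1.val + q.2.val := by
  rcases h with ⟨h₁, h₂⟩ | ⟨h₁, h₂⟩
  · rw [h₁]; exact Nat.add_lt_add_left h₂ _
  · rw [h₁]; exact Nat.add_lt_add_right h₂ _

theorem isStaircase_nil (M : Fin n → Fin N → Fin 2) (v : Fin 2) : IsStaircase M v [] :=
  ⟨by simp, List.isChain_nil⟩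

theorem IsStaircase.cons {M : Fin n → Fin N → Fin 2} {v : Fin 2} {p : Fin n × Fin N}
    {L : List (Fin n × Fin N)} (hL : IsStaircase M v L) (hp : M p.1 p.2 = v)
    (hstep : ∀ q ∈ L.head?, Step p q) : IsStaircase M v (p :: L) :=
  ⟨by simpa [hp] using hL.1, List.isChain_cons.2 ⟨hstep, hL.2⟩⟩

theorem IsStaircase.length_le {M : Fin n → Fin N → Fin 2} {v : Fin 2}
    {L : List (Fin n × Fin N)} (hL : IsStaircase M v L) (g : Fin n × Fin N → ℕ) (K : ℕ)
    (hg : ∀ p q, M p.1 p.2 = v → M q.1 q.2 = v → Step p q → g p < g q)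
    (hK : ∀ p, M p.1 p.2 = v → g p < K) : L.length ≤ K :=
  L.length_le_of_isChain_lt g
    (hL.2.imp_of_mem_imp fun p q hp hq => hg p q (hL.1 p hp) (hL.1 q hq))
    (fun p hp => hK p (hL.1 p hp))

theorem IsStaircase.length_le_add {M : Fin n → Fin N → Fin 2} {v : Fin 2}
    {L : List (Fin n × Fin N)} (hL : IsStaircase M v L) : L.length ≤ n + N :=
  hL.length_le (fun p => p.1.val + p.2.val) _ (fun _ _ _ _ => Step.val_add_lt)
    (fun p _ => by omega)

theorem IsStaircase.length_le_st {M : Fin n → Fin N → Fin 2} {v : Fin 2}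
    {L : List (Fin n × Fin N)} (hL : IsStaircase M v L) : L.length ≤ st M v :=
  le_csSup ⟨n + N, by rintro _ ⟨L, hL, rfl⟩; exact hL.length_le_add⟩ ⟨L, hL, rfl⟩

theorem st_le_of_forall_step_lt {M : Fin n → Fin N → Fin 2} {v : Fin 2}
    (g : Fin n × Fin N → ℕ) (K : ℕ)
    (hg : ∀ p q, M p.1 p.2 = v → M q.1 q.2 = v → Step p q → g p < g q)
    (hK : ∀ p, M p.1 p.2 = v → g p < K) : st M v ≤ K :=
  csSup_le ⟨0, [], isStaircase_nil M v, rfl⟩ fun _ ⟨_, hL, hlen⟩ => hlen ▸ hL.length_le g K hg hK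

end Staircase

/-- The matrix `P^{(n,N)}` of the paper, with 0-based indices: the zeros fill the upper-left
triangle `i + j < ⌊n/2⌋` and the lower-right triangle `i + j ≥ ⌊n/2⌋ + N - 1`. -/
def stairMatrix (n N : ℕ) (i : Fin n) (j : Fin N) : Fin 2 :=
  if i.val + j.val < n / 2 ∨ n / 2 + N ≤ i.val + j.val + 1 then 0 else 1

theorem stairMatrix_eq_zero_iff {n N : ℕ} {i : Fin n} {j : Fin N} :
    stairMatrix n N i j = 0 ↔ i.val + j.val < n / 2 ∨ n / 2 + N ≤ i.val + j.val + 1 := by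
  unfold stairMatrix; split_ifs <;> simp_all

theorem stairMatrix_eq_one_iff {n N : ℕ} {i : Fin n} {j : Fin N} :
    stairMatrix n N i j = 1 ↔ n / 2 ≤ i.val + j.val ∧ i.val + j.val + 1 < n / 2 + N := by
  unfold stairMatrix; split_ifs <;> simp <;> omega

theorem st_stairMatrix_one_le (n N : ℕ) : st (stairMatrix n N) 1 ≤ N - 1 :=
  st_le_of_forall_step_lt (fun p => p.1.val + p.2.val - n / 2) _
    (fun p q hp hq hpq => by
      have := hpq.val_add_lt
      rw [stairMatrix_eq_one_iff] at hp hq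
      omega)
    (fun p hp => by rw [stairMatrix_eq_one_iff] at hp; omega)

theorem st_stairMatrix_zero_le {n N : ℕ} (hnN : n ≤ N) :
    st (stairMatrix n N) 0 ≤ (n + 1) / 2 := by
  refine st_le_of_forall_step_lt (fun p => if p.1.val + p.2.val < n / 2 then p.1.val + p.2.val
      else p.1.val + p.2.val + 1 - (n / 2 + N)) _ (fun p q hp hq hpq => ?_) (fun p hp => ?_)
  · have := hpq.val_add_lt
    rw [stairMatrix_eq_zero_iff] at hp hq
    rcases hpq with ⟨h₁, h₂⟩ | ⟨h₁, h₂⟩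
    · have := Fin.val_eq_of_eq h₁
      have := q.2.isLt
      split_ifs <;> omega
    · have := Fin.val_eq_of_eq h₁
      have := q.1.isLt
      split_ifs <;> omega
  · rw [stairMatrix_eq_zero_iff] at hp
    have := p.1.isLt
    have := p.2.isLt
    split_ifs <;> omega

section LowerBound

variable {n N : ℕ}

def StaircasesFromRow (M : Fin n → Fin N → Fin 2) (r : Fin n)
    (S : Fin 2 → List (Fin n × Fin N)) : Prop :=
  ∀ v, IsStaircase M v (S v) ∧ ∀ p ∈ (S v).head?, p.1 = r

theorem IsStaircase.map_succ {M : Fin n → Fin (N + 1) → Fin 2} {v : Fin 2}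
    {L : List (Fin n × Fin N)} (hL : IsStaircase (fun i j => M i j.succ) v L) :
    IsStaircase M v (L.map (Prod.map id Fin.succ)) := by
  refine ⟨fun p hp => ?_, (List.isChain_map _).2 (hL.2.imp fun p q hpq => ?_)⟩
  · obtain ⟨q, hq, rfl⟩ := List.mem_map.1 hp
    exact hL.1 q hq
  rcases hpq with ⟨h₁, h₂⟩ | ⟨h₁, h₂⟩
  · exact Or.inl ⟨h₁, Fin.succ_lt_succ_iff.2 h₂⟩
  · exact Or.inr ⟨congrArg Fin.succ h₁, h₂⟩

theorem isStaircase_column (M : Fin n → Fin N → Fin 2) (v : Fin 2) (j : Fin N) :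
    IsStaircase M v (((List.finRange n).filter (M · j = v)).map (·, j)) := by
  refine ⟨by simp, (List.isChain_map _).2 ?_⟩
  exact (((List.pairwise_lt_finRange n).filter _).imp fun h => Or.inr ⟨rfl, h⟩).isChain

theorem exists_staircasesFromRow_of_one_column (hn : 0 < n) (M : Fin n → Fin 1 → Fin 2) :
    ∃ r S, StaircasesFromRow M r S ∧ (n + 1) / 2 ≤ ∑ v, (S v).length := by
  set C : Fin 2 → List (Fin n × Fin 1) := fun v =>
    ((List.finRange n).filter (M · 0 = v)).map (·, 0)
  have hC : (C 0).length + (C 1).length = n := by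
    have hfilter : (List.finRange n).filter (fun i => !decide (M i 0 = 0)) =
        (List.finRange n).filter (M · 0 = 1) :=
      List.filter_congr fun i _ => by generalize M i 0 = x; fin_cases x <;> rfl
    simpa [C, hfilter] using ((List.finRange n).length_eq_length_filter_add (M · 0 = 0)).symm
  obtain ⟨v₀, hv₀⟩ : ∃ v₀, (n + 1) / 2 ≤ (C v₀).length := by
    by_cases h : (n + 1) / 2 ≤ (C 0).length
    · exact ⟨0, h⟩
    · exact ⟨1, by omega⟩
  obtain ⟨p, hp⟩ : ∃ p, (C v₀).head? = some p :=
    Option.isSome_iff_exists.1 (List.isSome_head?.2 (List.ne_nil_of_length_pos (by omega)))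
  refine ⟨p.1, fun v => if v = v₀ then C v₀ else [], fun v => ?_,
    by fin_cases v₀ <;> simpa [Fin.sum_univ_two] using hv₀⟩
  dsimp only
  split_ifs with hv
  · subst hv; exact ⟨isStaircase_column M v 0, by simp [hp]⟩
  · exact ⟨isStaircase_nil M v, by simp⟩

theorem exists_staircasesFromRow (hn : 0 < n) :
    ∀ {N : ℕ} (M : Fin n → Fin (N + 1) → Fin 2),
      ∃ r S, StaircasesFromRow M r S ∧ (n + 1) / 2 + N ≤ ∑ v, (S v).length
  | 0, M => exists_staircasesFromRow_of_one_column hn M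
  | N + 1, M => by
    obtain ⟨r, S, hS, hlen⟩ := exists_staircasesFromRow hn fun i j => M i j.succ
    set T : Fin 2 → List (Fin n × Fin (N + 2)) := fun v =>
      if M r 0 = v then (r, 0) :: (S v).map (Prod.map id Fin.succ)
      else (S v).map (Prod.map id Fin.succ)
    refine ⟨r, T, fun v => ?_, ?_⟩
    · have hmap := (hS v).1.map_succ
      dsimp only [T]
      have hhead : ∀ q ∈ ((S v).map (Prod.map id Fin.succ)).head?, q.1 = r ∧ 0 < q.2 := by
        simp only [List.head?_map, Option.mem_map]
        rintro _ ⟨p, hp, rfl⟩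
        exact ⟨(hS v).2 p hp, Fin.succ_pos p.2⟩
      split_ifs with hrv
      · exact ⟨hmap.cons hrv fun q hq => Or.inl ⟨(hhead q hq).1.symm, (hhead q hq).2⟩, by simp⟩
      · exact ⟨hmap, fun q hq => (hhead q hq).1⟩
    · simp only [T, Fin.sum_univ_two] at hlen ⊢
      split_ifs <;> simp_all <;> omega

theorem le_st_add_st (hn : 0 < n) (M : Fin n → Fin (N + 1) → Fin 2) :
    (n + 1) / 2 + N ≤ st M 0 + st M 1 := by
  obtain ⟨r, S, hS, hlen⟩ := exists_staircasesFromRow hn M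
  rw [Fin.sum_univ_two] at hlen
  have := (hS 0).1.length_le_st
  have := (hS 1).1.length_le_st
  omega

end LowerBound

theorem stmt3 (n N : ℕ) (hn : 1 ≤ n) (hnN : n ≤ N) :
    IsLeast {s : ℕ | ∃ M : Fin n → Fin N → Fin 2, st M 0 + st M 1 = s}
      ((n + 1) / 2 + N - 1) := by
  obtain ⟨N, rfl⟩ : ∃ N', N = N' + 1 := ⟨N - 1, by omega⟩
  rw [Nat.add_sub_assoc (by omega), Nat.add_sub_cancel]
  refine ⟨⟨stairMatrix n (N + 1), le_antisymm ?_ (le_st_add_st hn _)⟩, ?_⟩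
  · have := st_stairMatrix_zero_le hnN
    have := st_stairMatrix_one_le n (N + 1)
    omega
  · rintro _ ⟨M, rfl⟩
    exact le_st_add_st hn M
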